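/- arXiv:2310.09638 — 8 statements merged into one kernel-verified Lean document; each statement's English description precedes it below -/
import Mathlib

section
/- For all real numbers x and w with 0 ≤ x ≤ 1 and 0 ≤ w ≤ 1, one has (1 − w)·w + w·(1 − w) − 3·((1 − x)·w + x·(1 − w)) ≤ 0; equivalently 2w(1 − w) ≤ 3((1 − x)w + x(1 − w)). -/
/-! The LP cost `(1 - x) w + x (1 - w)` is a convex combination of `w` and `1 - w`, hence at
least `min w (1 - w)`, while the algorithm's cost `2 w (1 - w)` is at most `2 min w (1 - w)`. -/

theorem mul_one_sub_le_min {R : Type*} [CommRing R] [LinearOrder R] [IsStrictOrderedRing R]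
    (w : R) : w * (1 - w) ≤ min w (1 - w) :=
  le_min (by nlinarith [sq_nonneg w]) (by nlinarith [sq_nonneg (1 - w)])

/-- For all `x, w ∈ [0,1]`,
`(1 − w)·w + w·(1 − w) − 3·((1 − x)·w + x·(1 − w)) ≤ 0`;
equivalently `2w(1 − w) ≤ 3((1 − x)w + x(1 − w))`. -/
theorem delta_le_zero_prob (x w : ℝ) (hx0 : 0 ≤ x) (hx1 : x ≤ 1)
    (hw0 : 0 ≤ w) (hw1 : w ≤ 1) :
    (1 - w) * w + w * (1 - w) - 3 * ((1 - x) * w + x * (1 - w)) ≤ 0 ∧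
    2 * w * (1 - w) ≤ 3 * ((1 - x) * w + x * (1 - w)) := by
  have hmin_nonneg : 0 ≤ min w (1 - w) := le_min hw0 (sub_nonneg.2 hw1)
  have hmin_le_lp : min w (1 - w) ≤ (1 - x) * w + x * (1 - w) :=
    Convex.min_le_combo w (1 - w) (sub_nonneg.2 hx1) hx0 (sub_add_cancel 1 x)
  have hbound : 2 * w * (1 - w) ≤ 3 * ((1 - x) * w + x * (1 - w)) :=
    calc 2 * w * (1 - w) = 2 * (w * (1 - w)) := by ring
      _ ≤ 2 * min w (1 - w) := by gcongr; exact mul_one_sub_le_min w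
      _ ≤ 3 * min w (1 - w) := by gcongr; norm_num
      _ ≤ 3 * ((1 - x) * w + x * (1 - w)) := by gcongr
  exact ⟨by linarith, hbound⟩
end

section
/- Let w⁻_1, w⁻_2, w⁻_3 ∈ [0,1], set w⁺_e = 1 − w⁻_e and f⁻_e = w⁻_e, f⁺_e = 1 − f⁻_e for e = 1,2,3. For every (x_1, x_2, x_3) ∈ L = {(0,0,0),(1,1,0),(1,0,1),(0,1,1),(1,1,1)}, the quantity ψ = (f⁺_3 f⁺_2 + f⁺_3 f⁻_2 + f⁻_3 f⁺_2)(x_1 w⁺_1 + (1 − x_1) w⁻_1) + (f⁺_1 f⁺_3 + f⁺_1 f⁻_3 + f⁻_1 f⁺_3)(x_2 w⁺_2 + (1 − x_2) w⁻_2) + (f⁺_2 f⁺_1 + f⁺_2 f⁻_1 + f⁻_2 f⁺_1)(x_3 w⁺_3 + (1 − x_3) w⁻_3) satisfies ψ ≥ w⁻_1 w⁺_2 w⁺_3 + w⁺_1 w⁻_2 w⁺_3 + w⁺_1 w⁺_2 w⁻_3. -/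
/-!
On a vertex of `L` every `xₑ` is `0` or `1`, so `ψ` is a polynomial in the weights alone and
`ψ - P` (with `P` the right-hand side) has an explicit expression that is visibly nonnegative on
`[0,1]³`. `ψ` and `P` are symmetric under a simultaneous permutation of the three edges, which
identifies the vertices `(1,1,0)`, `(1,0,1)`, `(0,1,1)`, leaving three cases:
* `(0,0,0)`: `ψ - P = 2 (w₁w₂(1-w₃) + w₂w₃(1-w₁) + w₃w₁(1-w₂))`;
* `(1,1,0)`: `ψ - P = 2 (1-w₁)(1-w₂) + w₃ (w₁(1-w₂) + w₂(1-w₁))`;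
* `(1,1,1)`: `ψ - P = (1-w₁)(1-w₂) + (1-w₂)(1-w₃) + (1-w₃)(1-w₁)`.
-/

namespace CorrelationClustering

def edgeCost (x w : ℝ) : ℝ := x * (1 - w) + (1 - x) * w

/-- The coefficient of edge `e` is `f⁺f⁺ + f⁺f⁻ + f⁻f⁺ = 1 - f⁻f⁻` over the two other edges. -/
def psi (w₁ w₂ w₃ x₁ x₂ x₃ : ℝ) : ℝ :=
  (1 - w₂ * w₃) * edgeCost x₁ w₁ + (1 - w₃ * w₁) * edgeCost x₂ w₂ +
    (1 - w₁ * w₂) * edgeCost x₃ w₃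

/-- The probability that exactly one of three independent edges, negative with probabilities
`w₁, w₂, w₃`, is negative. -/
def badTriangleProb (w₁ w₂ w₃ : ℝ) : ℝ :=
  w₁ * (1 - w₂) * (1 - w₃) + (1 - w₁) * w₂ * (1 - w₃) + (1 - w₁) * (1 - w₂) * w₃

theorem psi_rotate (w₁ w₂ w₃ x₁ x₂ x₃ : ℝ) :
    psi w₂ w₃ w₁ x₂ x₃ x₁ = psi w₁ w₂ w₃ x₁ x₂ x₃ := by
  unfold psi; ring

theorem psi_swap_two_three (w₁ w₂ w₃ x₁ x₂ x₃ : ℝ) :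
    psi w₁ w₃ w₂ x₁ x₃ x₂ = psi w₁ w₂ w₃ x₁ x₂ x₃ := by
  unfold psi; ring

theorem badTriangleProb_rotate (w₁ w₂ w₃ : ℝ) :
    badTriangleProb w₂ w₃ w₁ = badTriangleProb w₁ w₂ w₃ := by
  unfold badTriangleProb; ring

theorem badTriangleProb_swap_two_three (w₁ w₂ w₃ : ℝ) :
    badTriangleProb w₁ w₃ w₂ = badTriangleProb w₁ w₂ w₃ := by
  unfold badTriangleProb; ring

section Vertices

variable {w₁ w₂ w₃ : ℝ}

theorem badTriangleProb_le_psi_zero_zero_zero (h₁ : 0 ≤ w₁) (h₁' : w₁ ≤ 1) (h₂ : 0 ≤ w₂)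
    (h₂' : w₂ ≤ 1) (h₃ : 0 ≤ w₃) (h₃' : w₃ ≤ 1) :
    badTriangleProb w₁ w₂ w₃ ≤ psi w₁ w₂ w₃ 0 0 0 := by
  have key : psi w₁ w₂ w₃ 0 0 0 - badTriangleProb w₁ w₂ w₃ =
      2 * (w₁ * w₂ * (1 - w₃) + w₂ * w₃ * (1 - w₁) + w₃ * w₁ * (1 - w₂)) := by
    unfold psi badTriangleProb edgeCost; ring
  linarith [mul_nonneg (mul_nonneg h₁ h₂) (sub_nonneg.2 h₃'),
    mul_nonneg (mul_nonneg h₂ h₃) (sub_nonneg.2 h₁'),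
    mul_nonneg (mul_nonneg h₃ h₁) (sub_nonneg.2 h₂')]

theorem badTriangleProb_le_psi_one_one_zero (h₁ : 0 ≤ w₁) (h₁' : w₁ ≤ 1) (h₂ : 0 ≤ w₂)
    (h₂' : w₂ ≤ 1) (h₃ : 0 ≤ w₃) :
    badTriangleProb w₁ w₂ w₃ ≤ psi w₁ w₂ w₃ 1 1 0 := by
  have key : psi w₁ w₂ w₃ 1 1 0 - badTriangleProb w₁ w₂ w₃ =
      2 * ((1 - w₁) * (1 - w₂)) + w₃ * (w₁ * (1 - w₂) + w₂ * (1 - w₁)) := by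
    unfold psi badTriangleProb edgeCost; ring
  have cross : 0 ≤ w₁ * (1 - w₂) + w₂ * (1 - w₁) :=
    add_nonneg (mul_nonneg h₁ (sub_nonneg.2 h₂')) (mul_nonneg h₂ (sub_nonneg.2 h₁'))
  linarith [mul_nonneg (sub_nonneg.2 h₁') (sub_nonneg.2 h₂'), mul_nonneg h₃ cross]

theorem badTriangleProb_le_psi_one_one_one (h₁ : w₁ ≤ 1) (h₂ : w₂ ≤ 1) (h₃ : w₃ ≤ 1) :
    badTriangleProb w₁ w₂ w₃ ≤ psi w₁ w₂ w₃ 1 1 1 := by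
  have key : psi w₁ w₂ w₃ 1 1 1 - badTriangleProb w₁ w₂ w₃ =
      (1 - w₁) * (1 - w₂) + (1 - w₂) * (1 - w₃) + (1 - w₃) * (1 - w₁) := by
    unfold psi badTriangleProb edgeCost; ring
  linarith [mul_nonneg (sub_nonneg.2 h₁) (sub_nonneg.2 h₂),
    mul_nonneg (sub_nonneg.2 h₂) (sub_nonneg.2 h₃),
    mul_nonneg (sub_nonneg.2 h₃) (sub_nonneg.2 h₁)]

end Vertices

end CorrelationClustering

open CorrelationClustering in
/-- With `w⁺ₑ = 1 − w⁻ₑ`, `f⁻ₑ = w⁻ₑ`, `f⁺ₑ = 1 − f⁻ₑ`, for every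
`(x₁,x₂,x₃)` in `L = {(0,0,0),(1,1,0),(1,0,1),(0,1,1),(1,1,1)}`, the per-triple
LP coefficient `ψ` is at least `w⁻₁ w⁺₂ w⁺₃ + w⁺₁ w⁻₂ w⁺₃ + w⁺₁ w⁺₂ w⁻₃`. -/
theorem psi_ge_prob (w1 w2 w3 x1 x2 x3 : ℝ)
    (hw1 : w1 ∈ Set.Icc (0:ℝ) 1) (hw2 : w2 ∈ Set.Icc (0:ℝ) 1)
    (hw3 : w3 ∈ Set.Icc (0:ℝ) 1)
    (hx : (x1, x2, x3) ∈
      ({(0,0,0), (1,1,0), (1,0,1), (0,1,1), (1,1,1)} : Set (ℝ × ℝ × ℝ))) :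
    ((1 - w3) * (1 - w2) + (1 - w3) * w2 + w3 * (1 - w2)) *
        (x1 * (1 - w1) + (1 - x1) * w1) +
    ((1 - w1) * (1 - w3) + (1 - w1) * w3 + w1 * (1 - w3)) *
        (x2 * (1 - w2) + (1 - x2) * w2) +
    ((1 - w2) * (1 - w1) + (1 - w2) * w1 + w2 * (1 - w1)) *
        (x3 * (1 - w3) + (1 - x3) * w3) ≥
    w1 * (1 - w2) * (1 - w3) + (1 - w1) * w2 * (1 - w3) +
      (1 - w1) * (1 - w2) * w3 := by
  obtain ⟨h₁, h₁'⟩ := hw1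
  obtain ⟨h₂, h₂'⟩ := hw2
  obtain ⟨h₃, h₃'⟩ := hw3
  suffices badTriangleProb w1 w2 w3 ≤ psi w1 w2 w3 x1 x2 x3 by
    unfold psi badTriangleProb edgeCost at this; linarith
  simp only [Set.mem_insert_iff, Set.mem_singleton_iff, Prod.mk.injEq] at hx
  rcases hx with ⟨rfl, rfl, rfl⟩ | ⟨rfl, rfl, rfl⟩ | ⟨rfl, rfl, rfl⟩ | ⟨rfl, rfl, rfl⟩ |
    ⟨rfl, rfl, rfl⟩
  · exact badTriangleProb_le_psi_zero_zero_zero h₁ h₁' h₂ h₂' h₃ h₃'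
  · exact badTriangleProb_le_psi_one_one_zero h₁ h₁' h₂ h₂' h₃
  · rw [← psi_swap_two_three, ← badTriangleProb_swap_two_three]
    exact badTriangleProb_le_psi_one_one_zero h₁ h₁' h₃ h₃' h₂
  · rw [← psi_rotate, ← badTriangleProb_rotate]
    exact badTriangleProb_le_psi_one_one_zero h₂ h₂' h₃ h₃' h₁
  · exact badTriangleProb_le_psi_one_one_one h₁' h₂' h₃'
end

section
/- Let w⁻_1, w⁻_2, w⁻_3 ∈ [0,1], set w⁺_e = 1 − w⁻_e and f⁻_e = w⁻_e, f⁺_e = 1 − f⁻_e. For all (x_1, x_2, x_3) ∈ [0,1]³ satisfying x_1 ≤ x_2 + x_3, x_2 ≤ x_3 + x_1, and x_3 ≤ x_1 + x_2, one has φ − 3·ψ ≤ 0, where φ = f⁺_3 f⁺_2 w⁻_1 + (f⁺_3 f⁻_2 + f⁻_3 f⁺_2) w⁺_1 + f⁺_1 f⁺_3 w⁻_2 + (f⁺_1 f⁻_3 + f⁻_1 f⁺_3) w⁺_2 + f⁺_2 f⁺_1 w⁻_3 + (f⁺_2 f⁻_1 + f⁻_2 f⁺_1) w⁺_3 and ψ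 = (f⁺_3 f⁺_2 + f⁺_3 f⁻_2 + f⁻_3 f⁺_2)(x_1 w⁺_1 + (1 − x_1) w⁻_1) + (f⁺_1 f⁺_3 + f⁺_1 f⁻_3 + f⁻_1 f⁺_3)(x_2 w⁺_2 + (1 − x_2) w⁻_2) + (f⁺_2 f⁺_1 + f⁺_2 f⁻_1 + f⁻_2 f⁺_1)(x_3 w⁺_3 + (1 − x_3) w⁻_3). -/
/-!
Expanding, `φ` consists of the products `w⁻ w⁺ w⁺`, each three times, so `φ = 3 E` where `E` is
the probability that exactly one of the three pairs is a difference. And `ψ - E` is, identically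
in `x`, a combination of the slacks `x_j + x_k - x_i` of the triangle inequalities and `1 - x_i`
of the upper bounds, with coefficients that are products of weights in `[0, 1]`: a dual
certificate that `E` lower-bounds the LP objective `ψ`.
-/

namespace QuickCluster

variable {R : Type*}

section CommRing

variable [CommRing R]

def phi (w1 w2 w3 : R) : R :=
  (1 - w3) * (1 - w2) * w1 + ((1 - w3) * w2 + w3 * (1 - w2)) * (1 - w1) +
  (1 - w1) * (1 - w3) * w2 + ((1 - w1) * w3 + w1 * (1 - w3)) * (1 - w2) +
  (1 - w2) * (1 - w1) * w3 + ((1 - w2) * w1 + w2 * (1 - w1)) * (1 - w3)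

def psi (w1 w2 w3 x1 x2 x3 : R) : R :=
  ((1 - w3) * (1 - w2) + (1 - w3) * w2 + w3 * (1 - w2)) * (x1 * (1 - w1) + (1 - x1) * w1) +
  ((1 - w1) * (1 - w3) + (1 - w1) * w3 + w1 * (1 - w3)) * (x2 * (1 - w2) + (1 - x2) * w2) +
  ((1 - w2) * (1 - w1) + (1 - w2) * w1 + w2 * (1 - w1)) * (x3 * (1 - w3) + (1 - x3) * w3)

def exactlyOne (a b c : R) : R :=
  a * (1 - b) * (1 - c) + (1 - a) * b * (1 - c) + (1 - a) * (1 - b) * c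

theorem phi_eq_three_mul_exactlyOne (w1 w2 w3 : R) :
    phi w1 w2 w3 = 3 * exactlyOne w1 w2 w3 := by
  unfold phi exactlyOne
  ring

theorem psi_sub_exactlyOne (w1 w2 w3 x1 x2 x3 : R) :
    psi w1 w2 w3 x1 x2 x3 - exactlyOne w1 w2 w3 =
      (x2 + x3 - x1) * (1 - w2) * (1 - w3) + (x3 + x1 - x2) * (1 - w3) * (1 - w1) +
        (x1 + x2 - x3) * (1 - w1) * (1 - w2) +
      (1 - x1) * w1 * (w2 * (1 - w3) + (1 - w2) * w3) +
        (1 - x2) * w2 * (w3 * (1 - w1) + (1 - w3) * w1) +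
        (1 - x3) * w3 * (w1 * (1 - w2) + (1 - w1) * w2) := by
  unfold psi exactlyOne
  ring

end CommRing

variable [CommRing R] [PartialOrder R] [IsOrderedRing R]

theorem exactlyOne_le_psi {w1 w2 w3 x1 x2 x3 : R}
    (hw1 : w1 ∈ Set.Icc 0 1) (hw2 : w2 ∈ Set.Icc 0 1) (hw3 : w3 ∈ Set.Icc 0 1)
    (hx1 : x1 ≤ 1) (hx2 : x2 ≤ 1) (hx3 : x3 ≤ 1)
    (ht1 : x1 ≤ x2 + x3) (ht2 : x2 ≤ x3 + x1) (ht3 : x3 ≤ x1 + x2) :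
    exactlyOne w1 w2 w3 ≤ psi w1 w2 w3 x1 x2 x3 := by
  obtain ⟨hw1₀, hw1₁⟩ := hw1
  obtain ⟨hw2₀, hw2₁⟩ := hw2
  obtain ⟨hw3₀, hw3₁⟩ := hw3
  rw [← sub_nonneg, psi_sub_exactlyOne]
  have := sub_nonneg.2 hw1₁
  have := sub_nonneg.2 hw2₁
  have := sub_nonneg.2 hw3₁
  have := sub_nonneg.2 hx1
  have := sub_nonneg.2 hx2
  have := sub_nonneg.2 hx3
  have := sub_nonneg.2 ht1
  have := sub_nonneg.2 ht2
  have := sub_nonneg.2 ht3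
  positivity

end QuickCluster

/-- With `w⁺ₑ = 1 − w⁻ₑ`, `f⁻ₑ = w⁻ₑ`, `f⁺ₑ = 1 − f⁻ₑ`, for all
`(x₁,x₂,x₃) ∈ [0,1]³` satisfying the triangle inequalities, `φ − 3·ψ ≤ 0`. -/
theorem phi_sub_three_psi_le_zero (w1 w2 w3 x1 x2 x3 : ℝ)
    (hw1 : w1 ∈ Set.Icc (0:ℝ) 1) (hw2 : w2 ∈ Set.Icc (0:ℝ) 1)
    (hw3 : w3 ∈ Set.Icc (0:ℝ) 1)
    (hx1 : x1 ∈ Set.Icc (0:ℝ) 1) (hx2 : x2 ∈ Set.Icc (0:ℝ) 1)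
    (hx3 : x3 ∈ Set.Icc (0:ℝ) 1)
    (ht1 : x1 ≤ x2 + x3) (ht2 : x2 ≤ x3 + x1) (ht3 : x3 ≤ x1 + x2) :
    ((1 - w3) * (1 - w2) * w1 + ((1 - w3) * w2 + w3 * (1 - w2)) * (1 - w1) +
     (1 - w1) * (1 - w3) * w2 + ((1 - w1) * w3 + w1 * (1 - w3)) * (1 - w2) +
     (1 - w2) * (1 - w1) * w3 + ((1 - w2) * w1 + w2 * (1 - w1)) * (1 - w3)) -
    3 * (((1 - w3) * (1 - w2) + (1 - w3) * w2 + w3 * (1 - w2)) *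
           (x1 * (1 - w1) + (1 - x1) * w1) +
         ((1 - w1) * (1 - w3) + (1 - w1) * w3 + w1 * (1 - w3)) *
           (x2 * (1 - w2) + (1 - x2) * w2) +
         ((1 - w2) * (1 - w1) + (1 - w2) * w1 + w2 * (1 - w1)) *
           (x3 * (1 - w3) + (1 - x3) * w3)) ≤ 0 := by
  change QuickCluster.phi w1 w2 w3 - 3 * QuickCluster.psi w1 w2 w3 x1 x2 x3 ≤ 0
  rw [QuickCluster.phi_eq_three_mul_exactlyOne]
  have := QuickCluster.exactlyOne_le_psi hw1 hw2 hw3 hx1.2 hx2.2 hx3.2 ht1 ht2 ht3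
  linarith
end

section
/- Define Δ(x, w) = ((1 − h(w))·w + h(w)·(1 − w)) − (8/5)·((1 − x)·w + x·(1 − w)). For every w with 7/20 ≤ w ≤ 63/100 one has Δ(0, w) = −(50/7)·w² + (383/70)·w − 5/4 ≤ −28311/140000 and Δ(1, w) = −(50/7)·w² + (607/70)·w − 57/20 ≤ −30551/140000. -/
/-- The rounding function `h` of QuickCluster. -/
noncomputable def h (w : ℝ) : ℝ :=
  if w ≤ 7/20 then 0 else if w ≤ 63/100 then 25/7 * w - 5/4 else 1

/-- `Δ(x, w) = ((1 − h(w))·w + h(w)·(1 − w)) − (8/5)·((1 − x)·w + x·(1 − w))`. -/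
noncomputable def Δ (x w : ℝ) : ℝ :=
  ((1 - h w) * w + h w * (1 - w)) - (8/5) * ((1 - x) * w + x * (1 - w))

/-!
On `[7/20, 63/100]` the rounding function is affine, so `Δ(x, ·)` is a concave quadratic
there. The bounds are the maxima of these quadratics over all of `ℝ`, attained at the
vertices `w = 383/1000` and `w = 607/1000`, which lie in the interval, so they are sharp.
-/

theorem neg_mul_sq_add_mul_sub_le {a : ℝ} (ha : 0 < a) (b c w : ℝ) :
    -a * w ^ 2 + b * w - c ≤ b ^ 2 / (4 * a) - c := by
  have hvertex : b ^ 2 / (4 * a) - c - (-a * w ^ 2 + b * w - c) = a * (w - b / (2 * a)) ^ 2 := by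
    field_simp
    ring
  nlinarith [mul_nonneg ha.le (sq_nonneg (w - b / (2 * a)))]

theorem h_of_mem_Icc {w : ℝ} (hw0 : 7/20 ≤ w) (hw1 : w ≤ 63/100) : h w = 25/7 * w - 5/4 := by
  unfold h
  split_ifs with hle
  · rw [le_antisymm hle hw0]
    norm_num
  · rfl

theorem Δ_of_mem_Icc (x : ℝ) {w : ℝ} (hw0 : 7/20 ≤ w) (hw1 : w ≤ 63/100) :
    Δ x w = -(50/7) * w ^ 2 + (383/70 + 16/5 * x) * w - (5/4 + 8/5 * x) := by
  rw [Δ, h_of_mem_Icc hw0 hw1]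
  ring

/-- For every `w ∈ [7/20, 63/100]`,
`Δ(0, w) = −(50/7)w² + (383/70)w − 5/4 ≤ −28311/140000` and
`Δ(1, w) = −(50/7)w² + (607/70)w − 57/20 ≤ −30551/140000`. -/
theorem delta_on_I2 (w : ℝ) (hw0 : 7/20 ≤ w) (hw1 : w ≤ 63/100) :
    (Δ 0 w = -(50/7) * w^2 + 383/70 * w - 5/4 ∧
      -(50/7) * w^2 + 383/70 * w - 5/4 ≤ -28311/140000) ∧
    (Δ 1 w = -(50/7) * w^2 + 607/70 * w - 57/20 ∧
      -(50/7) * w^2 + 607/70 * w - 57/20 ≤ -30551/140000) := by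
  refine ⟨⟨?_, (neg_mul_sq_add_mul_sub_le (by norm_num) _ _ w).trans (by norm_num)⟩,
    ⟨?_, (neg_mul_sq_add_mul_sub_le (by norm_num) _ _ w).trans (by norm_num)⟩⟩
  · rw [Δ_of_mem_Icc 0 hw0 hw1]
    ring
  · rw [Δ_of_mem_Icc 1 hw0 hw1]
    ring
end

section
/- For all real numbers x and w with 0 ≤ x ≤ 1 and 0 ≤ w ≤ 1, one has (1 − h(w))·w + h(w)·(1 − w) ≤ (8/5)·((1 − x)·w + x·(1 − w)). -/
/-!
Both sides are convex combinations of `w` and `1 - w`: the left one with weight `h w`, the right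
one (before the factor `8/5`) with weight `x`. The right side is therefore at least
`8/5 * min w (1 - w)`, and it suffices to check `(1 - h w) * w + h w * (1 - w) ≤ 8/5 * min w (1 - w)`
on each of the three pieces of `h`. On the outer pieces this is linear; on the middle piece both
differences are concave quadratics in `w` with negative discriminant.
-/

theorem min_le_one_sub_mul_add_mul {α : Type*} [Ring α] [LinearOrder α] [IsOrderedRing α]
    {x : α} (a b : α) (hx0 : 0 ≤ x) (hx1 : x ≤ 1) :
    min a b ≤ (1 - x) * a + x * b :=
  calc min a b = (1 - x) * min a b + x * min a b := by rw [← add_mul, sub_add_cancel, one_mul]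
    _ ≤ (1 - x) * a + x * b := by
      have : 0 ≤ 1 - x := sub_nonneg.2 hx1
      gcongr
      exacts [min_le_left a b, min_le_right a b]

theorem one_sub_h_mul_add_h_mul_le_min {w : ℝ} (hw0 : 0 ≤ w) (hw1 : w ≤ 1) :
    (1 - h w) * w + h w * (1 - w) ≤ 8/5 * min w (1 - w) := by
  rw [mul_min_of_nonneg _ _ (by norm_num : (0 : ℝ) ≤ 8/5), le_min_iff]
  unfold h
  split_ifs with hlow hmid
  · constructor <;> linarith
  · constructor <;> nlinarith [sq_nonneg (w - 2/5), sq_nonneg (w - 3/5)]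
  · constructor <;> linarith

/-- For all `x, w ∈ [0,1]`,
`(1 − h(w))·w + h(w)·(1 − w) ≤ (8/5)·((1 − x)·w + x·(1 − w))`. -/
theorem delta_h_le_zero (x w : ℝ) (hx0 : 0 ≤ x) (hx1 : x ≤ 1)
    (hw0 : 0 ≤ w) (hw1 : w ≤ 1) :
    (1 - h w) * w + h w * (1 - w) ≤ (8/5) * ((1 - x) * w + x * (1 - w)) :=
  calc (1 - h w) * w + h w * (1 - w) ≤ 8/5 * min w (1 - w) :=
        one_sub_h_mul_add_h_mul_le_min hw0 hw1
    _ ≤ (8/5) * ((1 - x) * w + x * (1 - w)) := by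
        gcongr
        exact min_le_one_sub_mul_add_mul w (1 - w) hx0 hx1
end

section
/- For all real numbers w_1, w_2 with 0 ≤ w_1 ≤ 7/20, 7/20 ≤ w_2 ≤ 63/100 and 63/100 ≤ w_1 + w_2 ≤ 1, one has −(65/7)·w_1·w_2 + (129/20)·w_1 − (50/7)·w_2² + (799/70)·w_2 − 24/5 ≤ −117351/560000. -/
theorem appendix_I1_I2_I3_111_general (w1 w2 : ℝ)
    (h2 : w1 ≤ 7/20) (h4 : w2 ≤ 63/100) :
    -(65/7) * w1 * w2 + (129/20) * w1 - (50/7) * w2^2 + (799/70) * w2 - 24/5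
      ≤ -117351/560000 := by
  -- Affine in `w1` with nonnegative slope, so largest at `w1 = 7/20`; there it is a
  -- concave quadratic in `w2` with vertex `w2 = 1143/2000`.
  have slope_nonneg : 0 ≤ 129/20 - 65/7 * w2 := by linarith
  have decomposition :
      -(65/7) * w1 * w2 + (129/20) * w1 - (50/7) * w2^2 + (799/70) * w2 - 24/5
        = -117351/560000 - 50/7 * (w2 - 1143/2000)^2
          - (129/20 - 65/7 * w2) * (7/20 - w1) := by ring
  rw [decomposition]
  linarith [mul_nonneg slope_nonneg (sub_nonneg.2 h2), sq_nonneg (w2 - 1143/2000)]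

/-- appendix case `I₁ × I₂ × I₃`, `x = (1,1,1)`: the polynomial
is at most `−117351/560000` on the region. -/
theorem appendix_I1_I2_I3_111 (w1 w2 : ℝ)
    (h1 : 0 ≤ w1) (h2 : w1 ≤ 7/20) (h3 : 7/20 ≤ w2) (h4 : w2 ≤ 63/100)
    (h5 : 63/100 ≤ w1 + w2) (h6 : w1 + w2 ≤ 1) :
    -(65/7) * w1 * w2 + (129/20) * w1 - (50/7) * w2^2 + (799/70) * w2 - 24/5
      ≤ -117351/560000 :=
  appendix_I1_I2_I3_111_general w1 w2 h2 h4
end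

section
/- For all real numbers w_1, w_2 with 63/100 ≤ w_1 ≤ 1, 7/20 ≤ w_2 ≤ 63/100 and 63/100 ≤ w_1 + w_2 ≤ 1, one has 3·(100·w_2 − 63)·(−2·w_1 − w_2 + 2)/140 ≤ −1443/7000, with the maximum attained at (w_1, w_2) = (63/100, 37/100). -/
/-- appendix case `I₃ × I₂ × I₃`, `x = (1,1,1)`: the expression
is at most `−1443/7000` on the region, with the maximum attained at
`(w₁, w₂) = (63/100, 37/100)`. -/
theorem appendix_I3_I2_I3_111 :
    (∀ w1 w2 : ℝ, 63/100 ≤ w1 → w1 ≤ 1 → 7/20 ≤ w2 → w2 ≤ 63/100 →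
      63/100 ≤ w1 + w2 → w1 + w2 ≤ 1 →
      3 * (100 * w2 - 63) * (-2 * w1 - w2 + 2) / 140 ≤ -1443/7000) ∧
    3 * (100 * (37/100:ℝ) - 63) * (-2 * (63/100) - 37/100 + 2) / 140
      = -1443/7000 := by
  refine ⟨fun w1 w2 hw1 _ hw2 _ _ hsum => ?_, by norm_num⟩
  have hw2_le : w2 ≤ 37/100 := by linarith
  -- `w1 + w2 ≤ 1` lets us replace the second factor by `w2`, leaving a concave quadratic in `w2`
  -- whose roots `26/100` and `37/100` make it minimal at the endpoint `w2 = 37/100`.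
  have hsecond : w2 ≤ -2 * w1 - w2 + 2 := by linarith
  have hquad : 962/100 ≤ (63 - 100 * w2) * w2 := by
    nlinarith [mul_nonneg (sub_nonneg.2 hw2_le) (by linarith : (0:ℝ) ≤ w2 - 26/100)]
  have hprod : (63 - 100 * w2) * w2 ≤ (63 - 100 * w2) * (-2 * w1 - w2 + 2) :=
    mul_le_mul_of_nonneg_left hsecond (by linarith)
  linarith
end

section
/- For every (x_1, x_2, x_3) ∈ {(0,0,0), (1,1,0), (0,1,1), (1,1,1)} and every (w_1, w_2, w_3) with each w_e ∈ {0, 7/20, 63/100, 1} satisfying the triangle inequalities w_1 ≤ w_2 + w_3, w_2 ≤ w_3 + w_1, w_3 ≤ w_1 + w_2, one has Ω(x_1, x_2, x_3, w_1, w_2, w_3) ≤ 0, where Ω = φ − (8/5)·ψ with f⁻_e = h(w_e), f⁺_e = 1 − f⁻_e, w⁺_e = 1 − w_e. -/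
/-- The per-triple coefficient `φ` of the expected uncontrolled cost,
with `f⁻ₑ = h(wₑ)`, `f⁺ₑ = 1 − f⁻ₑ`, `w⁺ₑ = 1 − wₑ`. -/
noncomputable def phi (w1 w2 w3 : ℝ) : ℝ :=
  (1 - h w3) * (1 - h w2) * w1 +
    ((1 - h w3) * h w2 + h w3 * (1 - h w2)) * (1 - w1) +
  (1 - h w1) * (1 - h w3) * w2 +
    ((1 - h w1) * h w3 + h w1 * (1 - h w3)) * (1 - w2) +
  (1 - h w2) * (1 - h w1) * w3 +
    ((1 - h w2) * h w1 + h w2 * (1 - h w1)) * (1 - w3)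

/-- The per-triple coefficient `ψ` of the uncontrolled part of the LP cost. -/
noncomputable def psi (x1 x2 x3 w1 w2 w3 : ℝ) : ℝ :=
  ((1 - h w3) * (1 - h w2) + (1 - h w3) * h w2 + h w3 * (1 - h w2)) *
    (x1 * (1 - w1) + (1 - x1) * w1) +
  ((1 - h w1) * (1 - h w3) + (1 - h w1) * h w3 + h w1 * (1 - h w3)) *
    (x2 * (1 - w2) + (1 - x2) * w2) +
  ((1 - h w2) * (1 - h w1) + (1 - h w2) * h w1 + h w2 * (1 - h w1)) *
    (x3 * (1 - w3) + (1 - x3) * w3)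

/-- `Ω = φ − α·ψ`. -/
noncomputable def Ω (α x1 x2 x3 w1 w2 w3 : ℝ) : ℝ :=
  phi w1 w2 w3 - α * psi x1 x2 x3 w1 w2 w3

lemma h_zero : h 0 = 0 := by norm_num [h]
lemma h_a : h (7/20) = 0 := by norm_num [h]
lemma h_b : h (63/100) = 1 := by norm_num [h]
lemma h_one : h 1 = 1 := by norm_num [h]

set_option maxHeartbeats 2000000 in
/-- `Ω ≤ 0` (with `α = 8/5`) for every `x`-tuple in
`{(0,0,0),(1,1,0),(0,1,1),(1,1,1)}` and every `(w₁,w₂,w₃)` with entries in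
`{0, 7/20, 63/100, 1}` satisfying the triangle inequalities. -/
theorem omega_le_zero_on_grid (x1 x2 x3 w1 w2 w3 : ℝ)
    (hx : (x1, x2, x3) ∈
      ({(0,0,0), (1,1,0), (0,1,1), (1,1,1)} : Set (ℝ × ℝ × ℝ)))
    (hw1 : w1 ∈ ({0, 7/20, 63/100, 1} : Set ℝ))
    (hw2 : w2 ∈ ({0, 7/20, 63/100, 1} : Set ℝ))
    (hw3 : w3 ∈ ({0, 7/20, 63/100, 1} : Set ℝ))
    (ht1 : w1 ≤ w2 + w3) (ht2 : w2 ≤ w3 + w1) (ht3 : w3 ≤ w1 + w2) :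
    Ω (8/5) x1 x2 x3 w1 w2 w3 ≤ 0 := by
  simp only [Set.mem_insert_iff, Set.mem_singleton_iff, Prod.mk.injEq] at hx hw1 hw2 hw3
  obtain ⟨h1,h2,h3⟩|⟨h1,h2,h3⟩|⟨h1,h2,h3⟩|⟨h1,h2,h3⟩ := hx <;>
    subst h1 <;> subst h2 <;> subst h3 <;>
  rcases hw1 with h|h|h|h <;> subst h <;>
  rcases hw2 with h|h|h|h <;> subst h <;>
  rcases hw3 with h|h|h|h <;> subst h <;>
  (revert ht1 ht2 ht3; norm_num [Ω, phi, psi, h])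
end
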